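/- For distinct points a, b ∈ ℝ², the upper unit semicircles of a and b intersect in at most one point: there is at most one x ∈ [a_x − 1, a_x + 1] ∩ [b_x − 1, b_x + 1] with f_a(x) = f_b(x). -/

import Mathlib

noncomputable section

/-- The plane. -/
abbrev E2 := EuclideanSpace ℝ (Fin 2)

/-- The function whose graph (on `[p_x - 1, p_x + 1]`) is the upper unit
semicircle of `p`. -/
def fup (p : E2) (x : ℝ) : ℝ := p 1 + Real.sqrt (1 - (x - p 0) ^ 2)

lemma fup_circle (p : E2) (x : ℝ) (h1 : p 0 - 1 ≤ x) (h2 : x ≤ p 0 + 1) :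
    (x - p 0) ^ 2 + (fup p x - p 1) ^ 2 = 1 ∧ p 1 ≤ fup p x := by
  have h0 : (0:ℝ) ≤ 1 - (x - p 0) ^ 2 := by nlinarith
  have hs : fup p x - p 1 = Real.sqrt (1 - (x - p 0) ^ 2) := by
    simp [fup]
  constructor
  · rw [hs, Real.sq_sqrt h0]; ring
  · nlinarith [Real.sqrt_nonneg (1 - (x - p 0) ^ 2), hs]

/-- Core: two vectors perpendicular to a common nonzero vector with equal
norms are equal or opposite. -/
lemma core_aux (u v α β γ ε r : ℝ)
    (hperpx : u * α + v * β = 0) (hperpy : u * γ + v * ε = 0)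
    (hnormx : α ^ 2 + β ^ 2 = r) (hnormy : γ ^ 2 + ε ^ 2 = r)
    (huv : u ≠ 0 ∨ v ≠ 0) : (α = γ ∧ β = ε) ∨ (α = -γ ∧ β = -ε) := by
  have cross : α * ε - β * γ = 0 := by
    rcases huv with h | h
    · have : u * (α * ε - β * γ) = 0 := by linear_combination ε * hperpx - β * hperpy
      exact (mul_eq_zero.mp this).resolve_left h
    · have : v * (α * ε - β * γ) = 0 := by linear_combination (-γ) * hperpx + α * hperpy
      exact (mul_eq_zero.mp this).resolve_left h
  have key : (α * γ + β * ε - (α ^ 2 + β ^ 2)) * (α * γ + β * ε + (α ^ 2 + β ^ 2)) = 0 := by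
    linear_combination (α ^ 2 + β ^ 2) * hnormy - (α ^ 2 + β ^ 2) * hnormx
      - (α * ε - β * γ) * cross
  rcases mul_eq_zero.mp key with h | h
  · left
    have hsq : (α - γ) ^ 2 + (β - ε) ^ 2 = 0 := by
      linear_combination hnormy - hnormx - 2 * h
    constructor <;> nlinarith [sq_nonneg (α - γ), sq_nonneg (β - ε)]
  · right
    have hsq : (α + γ) ^ 2 + (β + ε) ^ 2 = 0 := by
      linear_combination hnormy - hnormx + 2 * h
    constructor <;> nlinarith [sq_nonneg (α + γ), sq_nonneg (β + ε)]

/-- Pure algebra: two distinct unit circles, with both intersection candidates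
in the upper half relative to both centers, must give the same `x`. -/
lemma upper_circles_aux (A B C D x y p q : ℝ)
    (hab' : ¬(A = C ∧ B = D))
    (ha1x : (x - A) ^ 2 + (p - B) ^ 2 = 1) (hb1x : (x - C) ^ 2 + (p - D) ^ 2 = 1)
    (ha1y : (y - A) ^ 2 + (q - B) ^ 2 = 1) (hb1y : (y - C) ^ 2 + (q - D) ^ 2 = 1)
    (ha2x : B ≤ p) (hb2x : D ≤ p) (ha2y : B ≤ q) (hb2y : D ≤ q) : x = y := by
  have hperpx : (C - A) * (x - (A + C) / 2) + (D - B) * (p - (B + D) / 2) = 0 := by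
    linear_combination (ha1x - hb1x) / 2
  have hperpy : (C - A) * (y - (A + C) / 2) + (D - B) * (q - (B + D) / 2) = 0 := by
    linear_combination (ha1y - hb1y) / 2
  have hnormx : (x - (A + C) / 2) ^ 2 + (p - (B + D) / 2) ^ 2
      = 1 - ((C - A) ^ 2 + (D - B) ^ 2) / 4 := by
    linear_combination ha1x - hperpx
  have hnormy : (y - (A + C) / 2) ^ 2 + (q - (B + D) / 2) ^ 2
      = 1 - ((C - A) ^ 2 + (D - B) ^ 2) / 4 := by
    linear_combination ha1y - hperpy
  have huv : C - A ≠ 0 ∨ D - B ≠ 0 := by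
    by_contra h
    push_neg at h
    exact hab' ⟨by linarith [h.1], by linarith [h.2]⟩
  rcases core_aux _ _ _ _ _ _ _ hperpx hperpy hnormx hnormy huv with ⟨h1, h2⟩ | ⟨h1, h2⟩
  · linarith
  · -- symmetric case: p + q = B + D, forcing B = D, p = q = B
    have hpq : p + q = B + D := by linarith
    have hBD : B = D := by linarith
    have hpB : p = B := by linarith
    have hqB : q = B := by linarith
    have hACne : A ≠ C := fun h' => hab' ⟨h', hBD⟩
    by_contra hxy
    have hxy' : x - y ≠ 0 := sub_ne_zero.mpr hxy
    have hp0 : p - B = 0 := by linarith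
    have hp0' : p - D = 0 := by linarith
    have hq0 : q - B = 0 := by linarith
    have hq0' : q - D = 0 := by linarith
    have e1 : (x - A) ^ 2 = 1 := by linear_combination ha1x - (p - B) * hp0
    have e2 : (x - C) ^ 2 = 1 := by linear_combination hb1x - (p - D) * hp0'
    have e3 : (y - A) ^ 2 = 1 := by linear_combination ha1y - (q - B) * hq0
    have e4 : (y - C) ^ 2 = 1 := by linear_combination hb1y - (q - D) * hq0'
    have f1 : (x - y) * (x + y - 2 * A) = 0 := by linear_combination e1 - e3
    have f2 : (x - y) * (x + y - 2 * C) = 0 := by linear_combination e2 - e4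
    have g1 := (mul_eq_zero.mp f1).resolve_left hxy'
    have g2 := (mul_eq_zero.mp f2).resolve_left hxy'
    exact hACne (by linarith)

/-- The upper unit semicircles of two distinct points intersect in at most one
point. -/
theorem stmt_6 (a b : E2) (hab : a ≠ b) (x y : ℝ)
    (hx : x ∈ Set.Icc (a 0 - 1) (a 0 + 1) ∩ Set.Icc (b 0 - 1) (b 0 + 1))
    (hy : y ∈ Set.Icc (a 0 - 1) (a 0 + 1) ∩ Set.Icc (b 0 - 1) (b 0 + 1))
    (hfx : fup a x = fup b x) (hfy : fup a y = fup b y) : x = y := by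
  obtain ⟨ha1x, ha2x⟩ := fup_circle a x hx.1.1 hx.1.2
  obtain ⟨hb1x, hb2x⟩ := fup_circle b x hx.2.1 hx.2.2
  obtain ⟨ha1y, ha2y⟩ := fup_circle a y hy.1.1 hy.1.2
  obtain ⟨hb1y, hb2y⟩ := fup_circle b y hy.2.1 hy.2.2
  rw [← hfx] at hb1x hb2x
  rw [← hfy] at hb1y hb2y
  have hab' : ¬(a 0 = b 0 ∧ a 1 = b 1) := by
    rintro ⟨h1, h2⟩
    apply hab
    ext i
    fin_cases i <;> assumption
  exact upper_circles_aux (a 0) (a 1) (b 0) (b 1) x y (fup a x) (fup a y) hab'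
    ha1x hb1x ha1y hb1y ha2x hb2x ha2y hb2y
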